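/- arXiv:1601.00675 — 2 statements merged into one kernel-verified Lean document; each statement's English description precedes it below -/
import Mathlib

section
/- With the Sheffer-type Chlodowsky operators T_n* as above, T_n*(e_2; x) = x^2 + (b_n/n)·x·(A(1) + 2A'(1) + A(1)H''(1))/A(1) + (b_n/n)^2·(A'(1) + A''(1))/A(1) for all x ≥ 0, where e_2(t) = t^2. -/
/-!
Put `y = (n / b n) x` and `g t = A t * exp (y * H t) = ∑ p_k(y) t ^ k`. Differentiating the power
series term by term at `t = 1` gives `∑ k ^ 2 p_k(y) = g''(1) + g'(1)`, and the product and chain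
rules express `g'(1)` and `g''(1)` through `A`, `H` and their derivatives at `1`, each carrying the
factor `exp (y * H 1)` that the normalisation `exp (-y * H 1) / A 1` of the operator cancels.
-/

open Real Filter Topology FormalMultilinearSeries

/-- The Chlodowsky-type generalized Szász operator built from Sheffer polynomials `p`. -/
noncomputable def szaszSheffer (A H : ℝ → ℝ) (p : ℕ → ℝ → ℝ) (b : ℕ → ℝ)
    (n : ℕ) (f : ℝ → ℝ) (x : ℝ) : ℝ :=
  (Real.exp (-((n : ℝ) / b n) * x * H 1) / A 1) *
    ∑' k : ℕ, p k (((n : ℝ) / b n) * x) * f (((k : ℝ) / n) * b n)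

variable {c : ℕ → ℝ} {F : ℝ → ℝ} {R : ℝ}

theorem hasFPowerSeriesOnBall_ofScalars_of_hasSum
    (hF : ∀ t : ℝ, |t| < R → HasSum (fun k ↦ c k * t ^ k) (F t)) (hR : 0 < R) :
    HasFPowerSeriesOnBall F (ofScalars ℝ c) 0 (ENNReal.ofReal R) where
  r_le := by
    refine ENNReal.le_of_forall_nnreal_lt fun r hr ↦ le_radius_of_tendsto _ (l := 0) ?_
    have hrR : |(r : ℝ)| < R := by rwa [NNReal.abs_eq, ← ENNReal.coe_lt_ofReal]
    simpa [ofScalars_norm] using (hF r hrR).summable.tendsto_atTop_zero.norm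
  r_pos := ENNReal.ofReal_pos.2 hR
  hasSum {t} ht := by
    rw [Metric.eball_ofReal, mem_ball_zero_iff, Real.norm_eq_abs] at ht
    simpa [ofScalars_apply_eq, mul_comm] using hF t ht

theorem hasSum_deriv_of_hasSum_pow
    (hF : ∀ t : ℝ, |t| < R → HasSum (fun k ↦ c k * t ^ k) (F t)) {t : ℝ} (ht : |t| < R) :
    HasSum (fun k : ℕ ↦ ((k : ℝ) + 1) * c (k + 1) * t ^ k) (deriv F t) := by
  have hP := (hasFPowerSeriesOnBall_ofScalars_of_hasSum hF ((abs_nonneg t).trans_lt ht)).fderiv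
  have hsum := (hP.hasSum (y := t) (by
    rwa [Metric.eball_ofReal, mem_ball_zero_iff, Real.norm_eq_abs])).mapL
    (ContinuousLinearMap.apply ℝ ℝ (1 : ℝ))
  simpa [apply_eq_pow_smul_coeff, mul_comm, mul_left_comm] using hsum

theorem differentiableAt_of_hasSum_pow
    (hF : ∀ t : ℝ, |t| < R → HasSum (fun k ↦ c k * t ^ k) (F t)) {t : ℝ} (ht : |t| < R) :
    DifferentiableAt ℝ F t := by
  refine ((hasFPowerSeriesOnBall_ofScalars_of_hasSum hF ((abs_nonneg t).trans_lt ht))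
    |>.analyticAt_of_mem ?_).differentiableAt
  rwa [Metric.eball_ofReal, mem_ball_zero_iff, Real.norm_eq_abs]

theorem hasSum_natCast_mul_of_hasSum_pow
    (hF : ∀ t : ℝ, |t| < R → HasSum (fun k ↦ c k * t ^ k) (F t)) (hR : 1 < R) :
    HasSum (fun k : ℕ ↦ (k : ℝ) * c k) (deriv F 1) := by
  rw [← hasSum_nat_add_iff' 1]
  simpa using hasSum_deriv_of_hasSum_pow hF (t := 1) (by rwa [abs_one])

theorem hasSum_sq_mul_of_hasSum_pow
    (hF : ∀ t : ℝ, |t| < R → HasSum (fun k ↦ c k * t ^ k) (F t)) (hR : 1 < R) :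
    HasSum (fun k : ℕ ↦ (k : ℝ) ^ 2 * c k) (deriv (deriv F) 1 + deriv F 1) := by
  have h2 : HasSum (fun k : ℕ ↦ (k : ℝ) * (k - 1) * c k) (deriv (deriv F) 1) := by
    have hF'' := hasSum_deriv_of_hasSum_pow (fun t ht ↦ hasSum_deriv_of_hasSum_pow hF ht)
      (t := 1) (by rwa [abs_one])
    refine (hasSum_nat_add_iff' 2).1 ?_
    norm_num [Finset.sum_range_succ]
    refine hF''.congr_fun fun k ↦ ?_
    push_cast
    ring
  exact (h2.add (hasSum_natCast_mul_of_hasSum_pow hF hR)).congr_fun fun k ↦ by ring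

section ProductWithExp

variable {A H : ℝ → ℝ} {y t₀ : ℝ}

theorem deriv_mul_exp_mul (hA : DifferentiableAt ℝ A t₀) (hH : DifferentiableAt ℝ H t₀) :
    deriv (fun t ↦ A t * exp (y * H t)) t₀ =
      (deriv A t₀ + y * A t₀ * deriv H t₀) * exp (y * H t₀) := by
  refine (hA.hasDerivAt.mul (hH.hasDerivAt.const_mul y).exp).deriv.trans ?_
  ring

theorem deriv_deriv_mul_exp_mul (hA : ∀ᶠ t in 𝓝 t₀, DifferentiableAt ℝ A t)
    (hH : ∀ᶠ t in 𝓝 t₀, DifferentiableAt ℝ H t) (hA' : DifferentiableAt ℝ (deriv A) t₀)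
    (hH' : DifferentiableAt ℝ (deriv H) t₀) :
    deriv (deriv fun t ↦ A t * exp (y * H t)) t₀ =
      (deriv (deriv A) t₀ + 2 * y * deriv A t₀ * deriv H t₀ + y * A t₀ * deriv (deriv H) t₀
        + y ^ 2 * A t₀ * deriv H t₀ ^ 2) * exp (y * H t₀) := by
  have hderiv : deriv (fun t ↦ A t * exp (y * H t)) =ᶠ[𝓝 t₀]
      fun t ↦ (deriv A t + y * A t * deriv H t) * exp (y * H t) := by
    filter_upwards [hA, hH] with t hAt hHt using deriv_mul_exp_mul hAt hHt
  have hA₀ := hA.self_of_nhds.hasDerivAt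
  have hH₀ := hH.self_of_nhds.hasDerivAt
  rw [hderiv.deriv_eq]
  refine (((hA'.hasDerivAt.add ((hA₀.const_mul y).mul hH'.hasDerivAt)).mul
    (hH₀.const_mul y).exp)).deriv.trans ?_
  simp only [Pi.add_apply, Pi.mul_apply]
  ring

end ProductWithExp

theorem sheffer_e2_general
    (R : ℝ) (hR : 1 < R)
    (A H : ℝ → ℝ) (a h : ℕ → ℝ)
    (hAser : ∀ t : ℝ, |t| < R → HasSum (fun k : ℕ => a k * t ^ k) (A t))
    (hHser : ∀ t : ℝ, |t| < R → HasSum (fun k : ℕ => h k * t ^ k) (H t))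
    (p : ℕ → ℝ → ℝ)
    (hgen : ∀ x t : ℝ, |t| < R →
      HasSum (fun k : ℕ => p k x * t ^ k) (A t * Real.exp (x * H t)))
    (hA1 : A 1 ≠ 0) (hH1 : deriv H 1 = 1)
    (b : ℕ → ℝ) (hbpos : ∀ n, 0 < b n)
    (n : ℕ) (hn : 1 ≤ n) (x : ℝ) :
    szaszSheffer A H p b n (fun t => t ^ 2) x
      = x ^ 2 + (b n / n) * x * ((A 1 + 2 * deriv A 1 + A 1 * deriv (deriv H) 1) / A 1)
        + (b n / n) ^ 2 * ((deriv A 1 + deriv (deriv A) 1) / A 1) := by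
  have hnear : ∀ᶠ t in 𝓝 (1 : ℝ), |t| < R :=
    (continuous_abs.tendsto 1).eventually_lt_const (by rwa [abs_one])
  have h1 : |(1 : ℝ)| < R := by rwa [abs_one]
  have hA := hnear.mono fun t ht ↦ differentiableAt_of_hasSum_pow hAser ht
  have hH := hnear.mono fun t ht ↦ differentiableAt_of_hasSum_pow hHser ht
  have hA' := differentiableAt_of_hasSum_pow (fun t ht ↦ hasSum_deriv_of_hasSum_pow hAser ht) h1
  have hH' := differentiableAt_of_hasSum_pow (fun t ht ↦ hasSum_deriv_of_hasSum_pow hHser ht) h1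
  have hmoment := hasSum_sq_mul_of_hasSum_pow (hgen (n / b n * x)) hR
  rw [deriv_deriv_mul_exp_mul hA hH hA' hH', deriv_mul_exp_mul hA.self_of_nhds hH.self_of_nhds,
    hH1] at hmoment
  have hb : b n ≠ 0 := (hbpos n).ne'
  have hn' : (n : ℝ) ≠ 0 := Nat.cast_ne_zero.2 (Nat.one_le_iff_ne_zero.1 hn)
  have hexp : exp (-((n : ℝ) / b n) * x * H 1) = (exp (n / b n * x * H 1))⁻¹ := by
    rw [← exp_neg]; ring_nf
  rw [szaszSheffer, ((hmoment.mul_left ((b n / n) ^ 2)).congr_fun fun k ↦ ?_).tsum_eq, hexp]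
  · field_simp
    ring
  · ring

theorem sheffer_e2
    (R : ℝ) (hR : 1 < R)
    (A H : ℝ → ℝ) (a h : ℕ → ℝ)
    (ha0 : a 0 ≠ 0) (hh1 : h 1 ≠ 0) (hh0 : h 0 = 0)
    (hAser : ∀ t : ℝ, |t| < R → HasSum (fun k : ℕ => a k * t ^ k) (A t))
    (hHser : ∀ t : ℝ, |t| < R → HasSum (fun k : ℕ => h k * t ^ k) (H t))
    (p : ℕ → ℝ → ℝ)
    (hgen : ∀ x t : ℝ, |t| < R →
      HasSum (fun k : ℕ => p k x * t ^ k) (A t * Real.exp (x * H t)))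
    (hp : ∀ (k : ℕ) (x : ℝ), 0 ≤ x → 0 ≤ p k x)
    (hA1 : A 1 ≠ 0) (hH1 : deriv H 1 = 1)
    (b : ℕ → ℝ) (hbpos : ∀ n, 0 < b n)
    (hbtop : Tendsto b atTop atTop)
    (hbn : Tendsto (fun n : ℕ => b n / (n : ℝ)) atTop (nhds 0))
    (n : ℕ) (hn : 1 ≤ n) (x : ℝ) (hx : 0 ≤ x) :
    szaszSheffer A H p b n (fun t => t ^ 2) x
      = x ^ 2 + (b n / n) * x * ((A 1 + 2 * deriv A 1 + A 1 * deriv (deriv H) 1) / A 1)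
        + (b n / n) ^ 2 * ((deriv A 1 + deriv (deriv A) 1) / A 1) :=
  sheffer_e2_general R hR A H a h hAser hHser p hgen hA1 hH1 b hbpos n hn x
end

section
/- Let f be bounded and uniformly continuous on [0,∞). Then |T_n*(f;x) − f(x)| ≤ 2K(f, δ_n(x)) where K(f,δ) = inf{‖f−g‖_∞ + δ‖g‖_{C_B^2} : g ∈ C_B^2[0,∞)} is Peetre's K-functional and δ_n(x) = (1/4)T_n*((t−x)^2;x), under the assumption A'(1) = 0. -/
/-! Put `y = n x / b_n` and `E = A(1) e^{y H(1)}`. Then `T_n* φ = ∑ w_k φ(k b_n / n)` with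
weights `w_k = p_k(y) / E ≥ 0`. The generating function at `t = 1` gives `∑ w_k = 1`, and its
derivative at `t = 1`, computed with `A'(1) = 0` and `H'(1) = 1`, gives `∑ w_k (k b_n / n) = x`,
so `T_n*` reproduces affine functions. For smooth `g`, Taylor's formula with Lagrange remainder
then yields `|T_n* g - g(x)| ≤ ‖g''‖ T_n*((t - x)²) / 2`, while `|T_n*(f - g)| ≤ ‖f - g‖`
because `T_n*` is positive and `T_n* 1 = 1`. Hence `|T_n* f - f(x)| ≤ 2 (‖f - g‖ + δ_n ‖g''‖)`
with `‖g''‖ ≤ ‖g‖_{C_B^2}`; take the infimum over `g`. -/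

open Real Filter Topology

/-- Sup norm on `[0,∞)`. -/
noncomputable def supnorm (f : ℝ → ℝ) : ℝ := sSup {y | ∃ x : ℝ, 0 ≤ x ∧ y = |f x|}

/-- Peetre's K-functional. -/
noncomputable def peetreK (f : ℝ → ℝ) (δ : ℝ) : ℝ :=
  sInf {y | ∃ g : ℝ → ℝ, ContDiff ℝ 2 g ∧ (∃ M, ∀ t : ℝ, |g t| ≤ M)
    ∧ (∃ M, ∀ t : ℝ, |deriv g t| ≤ M) ∧ (∃ M, ∀ t : ℝ, |deriv (deriv g) t| ≤ M)
    ∧ y = supnorm (fun t => f t - g t)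
        + δ * (supnorm g + supnorm (deriv g) + supnorm (deriv (deriv g)))}

open Set

section PowerSeries

theorem summable_pow_mul_abs_mul_pow_of_lt {c : ℕ → ℝ} {r r' : ℝ} (hr : 0 ≤ r) (hrr' : r < r')
    (hc : Summable fun k => c k * r' ^ k) (m : ℕ) :
    Summable fun k : ℕ => (k : ℝ) ^ m * |c k| * r ^ k := by
  have hr' : 0 < r' := hr.trans_lt hrr'
  obtain ⟨C, hC⟩ := hc.abs.tendsto_atTop_zero.bddAbove_range
  have hgeo : Summable fun k : ℕ => C * ((k : ℝ) ^ m * (r / r') ^ k) :=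
    (summable_pow_mul_geometric_of_norm_lt_one m (by
      rw [norm_div, Real.norm_of_nonneg hr, Real.norm_of_nonneg hr'.le]
      exact (div_lt_one hr').2 hrr')).mul_left C
  refine hgeo.of_nonneg_of_le (fun k => by positivity) fun k => ?_
  have hk : |c k| * r' ^ k ≤ C := by
    simpa [abs_mul, abs_of_pos (pow_pos hr' k)] using hC (mem_range_self k)
  calc (k : ℝ) ^ m * |c k| * r ^ k = (k : ℝ) ^ m * (r / r') ^ k * (|c k| * r' ^ k) := by
        rw [div_pow]; field_simp
    _ ≤ (k : ℝ) ^ m * (r / r') ^ k * C := by gcongr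
    _ = C * ((k : ℝ) ^ m * (r / r') ^ k) := mul_comm _ _

variable {c : ℕ → ℝ} {F : ℝ → ℝ} {R : ℝ}

theorem summable_pow_mul_mul_pow_of_hasSum
    (hF : ∀ t : ℝ, |t| < R → HasSum (fun k => c k * t ^ k) (F t)) {t : ℝ} (ht : |t| < R)
    (m : ℕ) : Summable fun k : ℕ => (k : ℝ) ^ m * c k * t ^ k := by
  obtain ⟨r, htr, hrR⟩ := exists_between ht
  have hs := summable_pow_mul_abs_mul_pow_of_lt (abs_nonneg t) htr
    (hF r (by rwa [abs_of_pos ((abs_nonneg t).trans_lt htr)])).summable m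
  exact .of_norm_bounded hs fun k => by simp

theorem hasDerivAt_of_hasSum_pow
    (hF : ∀ t : ℝ, |t| < R → HasSum (fun k => c k * t ^ k) (F t)) {t₀ : ℝ} (ht₀ : |t₀| < R) :
    HasDerivAt F (∑' k : ℕ, (k : ℝ) * c k * t₀ ^ (k - 1)) t₀ := by
  obtain ⟨r, ht₀r, hrR⟩ := exists_between ht₀
  have hr : 0 < r := (abs_nonneg t₀).trans_lt ht₀r
  have hu : Summable fun k : ℕ => (k : ℝ) * |c k| * r ^ (k - 1) := by
    refine ((summable_pow_mul_mul_pow_of_hasSum hF (t := r) (by rwa [abs_of_pos hr])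
      1).abs.div_const r).congr fun k => ?_
    rcases k with _ | k
    · simp
    · simp only [pow_one, abs_mul, abs_pow, Nat.abs_cast, abs_of_pos hr, Nat.add_sub_cancel,
        pow_succ]
      field_simp
  have hbound : ∀ (k : ℕ) (t : ℝ), t ∈ Ioo (-r) r →
      ‖c k * ((k : ℝ) * t ^ (k - 1))‖ ≤ (k : ℝ) * |c k| * r ^ (k - 1) := by
    intro k t ht
    rw [norm_mul, norm_mul, Real.norm_eq_abs, Real.norm_natCast, norm_pow, Real.norm_eq_abs]
    have : |t| ≤ r := abs_le.2 ⟨ht.1.le, ht.2.le⟩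
    calc |c k| * ((k : ℝ) * |t| ^ (k - 1)) ≤ |c k| * ((k : ℝ) * r ^ (k - 1)) := by gcongr
      _ = _ := by ring
  have hball : Ioo (-r) r ∈ 𝓝 t₀ := isOpen_Ioo.mem_nhds (abs_lt.1 ht₀r)
  have hF_eq : (fun t => ∑' k : ℕ, c k * t ^ k) =ᶠ[𝓝 t₀] F := by
    filter_upwards [hball] with t ht
    exact (hF t (lt_trans (abs_lt.2 ht) hrR)).tsum_eq
  refine ((hasDerivAt_tsum_of_isPreconnected hu isOpen_Ioo isPreconnected_Ioo
    (fun k t _ => (hasDerivAt_pow k t).const_mul (c k)) hbound (mem_of_mem_nhds hball)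
    (hF t₀ ht₀).summable (mem_of_mem_nhds hball)).congr_of_eventuallyEq hF_eq.symm).congr_deriv ?_
  exact tsum_congr fun k => by ring

end PowerSeries

theorem hasSum_natCast_mul_sheffer {R : ℝ} {A H : ℝ → ℝ} {a h : ℕ → ℝ} {p : ℕ → ℝ → ℝ}
    (hR : 1 < R)
    (hAser : ∀ t : ℝ, |t| < R → HasSum (fun k : ℕ => a k * t ^ k) (A t))
    (hHser : ∀ t : ℝ, |t| < R → HasSum (fun k : ℕ => h k * t ^ k) (H t))
    (hgen : ∀ x t : ℝ, |t| < R →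
      HasSum (fun k : ℕ => p k x * t ^ k) (A t * Real.exp (x * H t)))
    (hA' : deriv A 1 = 0) (hH' : deriv H 1 = 1) (y : ℝ) :
    HasSum (fun k : ℕ => (k : ℝ) * p k y) (y * (A 1 * Real.exp (y * H 1))) := by
  have h1 : |(1 : ℝ)| < R := by rwa [abs_one]
  have hA : HasDerivAt A 0 1 := by
    simpa only [hA'] using (hasDerivAt_of_hasSum_pow hAser h1).differentiableAt.hasDerivAt
  have hH : HasDerivAt H 1 1 := by
    simpa only [hH'] using (hasDerivAt_of_hasSum_pow hHser h1).differentiableAt.hasDerivAt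
  have hclosed := hA.mul ((hH.const_mul y).exp)
  have hseries := hasDerivAt_of_hasSum_pow (hgen y) h1
  have hsum := (summable_pow_mul_mul_pow_of_hasSum (hgen y) h1 1).hasSum
  simp only [one_pow, mul_one, pow_one] at hseries hsum
  convert hsum using 1
  rw [hseries.unique hclosed]
  ring

theorem abs_sub_sub_deriv_mul_le_of_abs_deriv_deriv_le {g : ℝ → ℝ} (hg : ContDiff ℝ 2 g)
    {s : Set ℝ} (hs : s.OrdConnected) {M x t : ℝ} (hx : x ∈ s) (ht : t ∈ s)
    (hM : ∀ u ∈ s, |deriv (deriv g) u| ≤ M) :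
    |g t - g x - deriv g x * (t - x)| ≤ M / 2 * (t - x) ^ 2 := by
  rcases eq_or_ne x t with rfl | hxt
  · simp
  obtain ⟨ξ, hξ, hrem⟩ := taylor_mean_remainder_lagrange_iteratedDeriv (n := 1) hxt hg.contDiffOn
  have hderiv : derivWithin g (uIcc x t) x = deriv g x :=
    ((hg.differentiable two_ne_zero) x).derivWithin (uniqueDiffOn_uIcc hxt x left_mem_uIcc)
  rw [taylorWithinEval_succ, taylor_within_zero_eval, iteratedDerivWithin_one, hderiv,
    iteratedDeriv_succ, iteratedDeriv_one] at hrem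
  have hlagrange : g t - g x - deriv g x * (t - x) = deriv (deriv g) ξ * (t - x) ^ 2 / 2 := by
    norm_num at hrem
    linarith
  have hξM := hM ξ (hs.uIcc_subset hx ht (uIoo_subset_uIcc_self hξ))
  rw [hlagrange, abs_div, abs_mul, abs_two, abs_of_nonneg (sq_nonneg (t - x))]
  linarith [mul_le_mul_of_nonneg_right hξM (sq_nonneg (t - x))]

theorem abs_le_supnorm {φ : ℝ → ℝ} {M : ℝ} (hM : ∀ t, |φ t| ≤ M) {s : ℝ} (hs : 0 ≤ s) :
    |φ s| ≤ supnorm φ :=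
  le_csSup ⟨M, by rintro _ ⟨t, -, rfl⟩; exact hM t⟩ ⟨s, hs, rfl⟩

theorem supnorm_nonneg {φ : ℝ → ℝ} {M : ℝ} (hM : ∀ t, |φ t| ≤ M) : 0 ≤ supnorm φ :=
  (abs_nonneg _).trans (abs_le_supnorm hM le_rfl)

theorem le_peetreK {f : ℝ → ℝ} {δ c : ℝ}
    (h : ∀ g : ℝ → ℝ, ContDiff ℝ 2 g → (∃ M, ∀ t, |g t| ≤ M) → (∃ M, ∀ t, |deriv g t| ≤ M) →
      (∃ M, ∀ t, |deriv (deriv g) t| ≤ M) →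
      c ≤ supnorm (fun t => f t - g t)
        + δ * (supnorm g + supnorm (deriv g) + supnorm (deriv (deriv g)))) :
    c ≤ peetreK f δ :=
  le_csInf ⟨_, 0, contDiff_const, ⟨0, by simp⟩, ⟨0, by simp⟩, ⟨0, by simp⟩, rfl⟩
    (by rintro _ ⟨g, hg, h0, h1, h2, rfl⟩; exact h g hg h0 h1 h2)

section PositiveDiscreteOperator

variable {w t : ℕ → ℝ} {x : ℝ}

theorem summable_mul_comp_of_abs_le (hw : ∀ k, 0 ≤ w k) (hws : Summable w) {φ : ℝ → ℝ} {M : ℝ}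
    (hφ : ∀ s, |φ s| ≤ M) : Summable fun k => w k * φ (t k) :=
  .of_norm_bounded (hws.mul_right M) fun k => by
    rw [norm_mul, Real.norm_of_nonneg (hw k), Real.norm_eq_abs]
    exact mul_le_mul_of_nonneg_left (hφ _) (hw k)

theorem abs_tsum_mul_comp_le_supnorm (hw : ∀ k, 0 ≤ w k) (hw1 : HasSum w 1)
    (ht : ∀ k, 0 ≤ t k) {φ : ℝ → ℝ} {M : ℝ} (hφ : ∀ s, |φ s| ≤ M) :
    |∑' k, w k * φ (t k)| ≤ supnorm φ := by
  refine (tsum_of_norm_bounded (f := fun k => w k * φ (t k)) (hw1.mul_left (supnorm φ))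
    fun k => ?_).trans_eq (mul_one _)
  rw [norm_mul, Real.norm_of_nonneg (hw k), Real.norm_eq_abs, mul_comm]
  exact mul_le_mul_of_nonneg_right (abs_le_supnorm hφ (ht k)) (hw k)

theorem abs_tsum_mul_comp_sub_le_of_contDiff (hw : ∀ k, 0 ≤ w k) (hw1 : HasSum w 1)
    (ht : ∀ k, 0 ≤ t k) (hmean : HasSum (fun k => w k * t k) x)
    (hvar : Summable fun k => w k * (t k - x) ^ 2) (hx : 0 ≤ x)
    {g : ℝ → ℝ} (hg : ContDiff ℝ 2 g) {M₀ M₂ : ℝ} (hM₀ : ∀ s, |g s| ≤ M₀)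
    (hM₂ : ∀ s, |deriv (deriv g) s| ≤ M₂) :
    |∑' k, w k * g (t k) - g x|
      ≤ supnorm (deriv (deriv g)) / 2 * ∑' k, w k * (t k - x) ^ 2 := by
  have hrem : HasSum (fun k => w k * (g (t k) - g x - deriv g x * (t k - x)))
      (∑' k, w k * g (t k) - g x) := by
    have := ((summable_mul_comp_of_abs_le (t := t) hw hw1.summable hM₀).hasSum.sub
      (hw1.mul_right (g x))).sub ((hmean.sub (hw1.mul_right x)).mul_left (deriv g x))
    rw [one_mul, one_mul, sub_self, mul_zero, sub_zero] at this
    exact this.congr_fun fun k => by ring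
  refine hrem.norm_le_of_bounded (hvar.hasSum.mul_left _) fun k => ?_
  rw [Real.norm_eq_abs, abs_mul, abs_of_nonneg (hw k), mul_left_comm]
  exact mul_le_mul_of_nonneg_left (abs_sub_sub_deriv_mul_le_of_abs_deriv_deriv_le hg
    ordConnected_Ici hx (ht k) fun u hu => abs_le_supnorm hM₂ hu) (hw k)

theorem abs_tsum_mul_comp_sub_le_two_mul_peetreK (hw : ∀ k, 0 ≤ w k) (hw1 : HasSum w 1)
    (ht : ∀ k, 0 ≤ t k) (hmean : HasSum (fun k => w k * t k) x)
    (hvar : Summable fun k => w k * (t k - x) ^ 2) (hx : 0 ≤ x)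
    {f : ℝ → ℝ} {M : ℝ} (hf : ∀ s, |f s| ≤ M) :
    |∑' k, w k * f (t k) - f x| ≤ 2 * peetreK f (1 / 4 * ∑' k, w k * (t k - x) ^ 2) := by
  have hV : 0 ≤ ∑' k, w k * (t k - x) ^ 2 := tsum_nonneg fun k => mul_nonneg (hw k) (sq_nonneg _)
  suffices |∑' k, w k * f (t k) - f x| / 2 ≤ peetreK f (1 / 4 * ∑' k, w k * (t k - x) ^ 2) by
    linarith
  refine le_peetreK fun g hg ⟨M₀, hM₀⟩ ⟨M₁, hM₁⟩ ⟨M₂, hM₂⟩ => ?_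
  have hfg : ∀ s, |f s - g s| ≤ M + M₀ := fun s => (abs_sub _ _).trans (add_le_add (hf s) (hM₀ s))
  have hS₁ := summable_mul_comp_of_abs_le (t := t) hw hw1.summable hfg
  have hS₂ := summable_mul_comp_of_abs_le (t := t) hw hw1.summable hM₀
  have hsplit : ∑' k, w k * f (t k)
      = ∑' k, w k * (f (t k) - g (t k)) + ∑' k, w k * g (t k) := by
    rw [← hS₁.tsum_add hS₂]
    exact tsum_congr fun k => by ring
  have hbound : |∑' k, w k * f (t k) - f x|
      ≤ 2 * supnorm (fun s => f s - g s)
        + supnorm (deriv (deriv g)) / 2 * ∑' k, w k * (t k - x) ^ 2 := by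
    rw [hsplit]
    calc _ = |(∑' k, w k * (f (t k) - g (t k)) - (f x - g x))
          + (∑' k, w k * g (t k) - g x)| := by ring_nf
      _ ≤ |∑' k, w k * (f (t k) - g (t k))| + |f x - g x| + |∑' k, w k * g (t k) - g x| :=
          (abs_add_le _ _).trans (add_le_add_left (abs_sub _ _) _)
      _ ≤ _ := by
          linarith [abs_tsum_mul_comp_le_supnorm hw hw1 ht hfg, abs_le_supnorm hfg hx,
            abs_tsum_mul_comp_sub_le_of_contDiff hw hw1 ht hmean hvar hx hg hM₀ hM₂]
  nlinarith [mul_nonneg hV (add_nonneg (supnorm_nonneg hM₀) (supnorm_nonneg hM₁))]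

end PositiveDiscreteOperator

theorem szaszSheffer_eq_tsum (A H : ℝ → ℝ) (p : ℕ → ℝ → ℝ) (b : ℕ → ℝ) (n : ℕ) (φ : ℝ → ℝ)
    (x : ℝ) :
    szaszSheffer A H p b n φ x = ∑' k : ℕ, p k ((n : ℝ) / b n * x)
      / (A 1 * Real.exp ((n : ℝ) / b n * x * H 1)) * φ ((k : ℝ) / n * b n) := by
  rw [szaszSheffer, ← tsum_mul_left]
  refine tsum_congr fun k => ?_
  rw [neg_mul, neg_mul, Real.exp_neg]
  field_simp

theorem sheffer_peetre_estimate_general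
    (R : ℝ) (hR : 1 < R)
    (A H : ℝ → ℝ) (a h : ℕ → ℝ)
    (hAser : ∀ t : ℝ, |t| < R → HasSum (fun k : ℕ => a k * t ^ k) (A t))
    (hHser : ∀ t : ℝ, |t| < R → HasSum (fun k : ℕ => h k * t ^ k) (H t))
    (p : ℕ → ℝ → ℝ)
    (hgen : ∀ x t : ℝ, |t| < R →
      HasSum (fun k : ℕ => p k x * t ^ k) (A t * Real.exp (x * H t)))
    (hp : ∀ (k : ℕ) (x : ℝ), 0 ≤ x → 0 ≤ p k x)
    (hA1 : A 1 ≠ 0) (hH1 : deriv H 1 = 1)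
    (b : ℕ → ℝ) (hbpos : ∀ n, 0 < b n)
    (hA'0 : deriv A 1 = 0)
    (f : ℝ → ℝ) (hfb : ∃ M, ∀ t : ℝ, |f t| ≤ M)
    (n : ℕ) (hn : 1 ≤ n) (x : ℝ) (hx : 0 ≤ x) :
    |szaszSheffer A H p b n f x - f x|
      ≤ 2 * peetreK f ((1 / 4) * szaszSheffer A H p b n (fun t => (t - x) ^ 2) x) := by
  obtain ⟨M, hM⟩ := hfb
  have hb := hbpos n
  have hn₀ : (0 : ℝ) < n := by exact_mod_cast hn
  set y := (n : ℝ) / b n * x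
  set E := A 1 * Real.exp (y * H 1)
  have hy : 0 ≤ y := by positivity
  have h1R : |(1 : ℝ)| < R := by rwa [abs_one]
  have h₀ : HasSum (fun k => p k y) E := by simpa using hgen y 1 h1R
  have h₁ : HasSum (fun k : ℕ => (k : ℝ) * p k y) (y * E) :=
    hasSum_natCast_mul_sheffer hR hAser hHser hgen hA'0 hH1 y
  have h₂ : Summable fun k : ℕ => (k : ℝ) ^ 2 * p k y := by
    simpa using summable_pow_mul_mul_pow_of_hasSum (hgen y) h1R 2
  have hE : 0 < E := (h₀.nonneg fun k => hp k y hy).lt_of_ne' (mul_ne_zero hA1 (exp_ne_zero _))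
  have hmean : y * E * (b n / n / E) = x := by simp only [y]; field_simp
  simp only [szaszSheffer_eq_tsum]
  refine abs_tsum_mul_comp_sub_le_two_mul_peetreK (fun k => div_nonneg (hp k y hy) hE.le) ?_
    (fun k => by positivity) ?_ ?_ hx hM
  · simpa [hE.ne'] using h₀.div_const E
  · exact hmean ▸ (h₁.mul_right _).congr_fun fun k => by ring
  · exact (((h₂.mul_left ((b n / n) ^ 2 / E)).sub
      (h₁.summable.mul_left (2 * x * (b n / n) / E))).add
      (h₀.summable.mul_left (x ^ 2 / E))).congr fun k => by ring

theorem sheffer_peetre_estimate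
    (R : ℝ) (hR : 1 < R)
    (A H : ℝ → ℝ) (a h : ℕ → ℝ)
    (ha0 : a 0 ≠ 0) (hh1 : h 1 ≠ 0) (hh0 : h 0 = 0)
    (hAser : ∀ t : ℝ, |t| < R → HasSum (fun k : ℕ => a k * t ^ k) (A t))
    (hHser : ∀ t : ℝ, |t| < R → HasSum (fun k : ℕ => h k * t ^ k) (H t))
    (p : ℕ → ℝ → ℝ)
    (hgen : ∀ x t : ℝ, |t| < R →
      HasSum (fun k : ℕ => p k x * t ^ k) (A t * Real.exp (x * H t)))
    (hp : ∀ (k : ℕ) (x : ℝ), 0 ≤ x → 0 ≤ p k x)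
    (hA1 : A 1 ≠ 0) (hH1 : deriv H 1 = 1)
    (b : ℕ → ℝ) (hbpos : ∀ n, 0 < b n)
    (hbtop : Tendsto b atTop atTop)
    (hbn : Tendsto (fun n : ℕ => b n / (n : ℝ)) atTop (nhds 0))
    (hA'0 : deriv A 1 = 0)
    (f : ℝ → ℝ) (hfc : UniformContinuous f) (hfb : ∃ M, ∀ t : ℝ, |f t| ≤ M)
    (n : ℕ) (hn : 1 ≤ n) (x : ℝ) (hx : 0 ≤ x) :
    |szaszSheffer A H p b n f x - f x|
      ≤ 2 * peetreK f ((1 / 4) * szaszSheffer A H p b n (fun t => (t - x) ^ 2) x) :=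
  sheffer_peetre_estimate_general R hR A H a h hAser hHser p hgen hp hA1 hH1 b hbpos hA'0 f hfb n hn
    x hx
end
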